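/- Let τ be a strictly convex norm on ℝ² and let u₁, u₂, u₃ ∈ ℝ² be three points not lying on a common line. Then the function φ : ℝ² → ℝ defined by φ(y) = τ(u₁ − y) + τ(u₂ − y) + τ(u₃ − y) is strictly convex, and it attains its minimum over ℝ² at a unique point. -/
import Mathlib


open scoped ENNReal

/-- The plane `ℝ²`. -/
abbrev P2 : Type := ℝ × ℝ

/-- `τ : ℝ² → ℝ` is a norm. -/
structure IsNorm (τ : P2 → ℝ) : Prop where
  eq_zero_iff : ∀ x : P2, τ x = 0 ↔ x = 0
  smul_eq : ∀ (c : ℝ) (x : P2), τ (c • x) = |c| * τ x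
  add_le : ∀ x y : P2, τ (x + y) ≤ τ x + τ y

/-- `τ` is a strictly convex norm: `τ(x+y) < τ(x)+τ(y)` whenever `x` and `y` are not
nonnegative multiples of one another. -/
def IsStrictlyConvexNorm (τ : P2 → ℝ) : Prop :=
  IsNorm τ ∧ ∀ x y : P2, ¬ (∃ c : ℝ, 0 ≤ c ∧ (x = c • y ∨ y = c • x)) →
    τ (x + y) < τ x + τ y

/-- The `τ`-diameter of a set (in `ℝ≥0∞`). -/
noncomputable def tauDiam (τ : P2 → ℝ) (A : Set P2) : ℝ≥0∞ :=
  ⨆ x ∈ A, ⨆ y ∈ A, ENNReal.ofReal (τ (x - y))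

/-- The one-dimensional Hausdorff measure of `S` computed in the metric
`(x,y) ↦ τ(x−y)`: `lim_{ε→0} inf {Σ diam_τ(Aᵢ) : S ⊆ ⋃ Aᵢ, diam_τ(Aᵢ) ≤ ε}`. -/
noncomputable def tauLen (τ : P2 → ℝ) (S : Set P2) : ℝ≥0∞ :=
  ⨆ (ε : ℝ) (_ : 0 < ε),
    ⨅ (A : ℕ → Set P2) (_ : S ⊆ ⋃ i, A i)
      (_ : ∀ i, tauDiam τ (A i) ≤ ENNReal.ofReal ε),
      ∑' i, tauDiam τ (A i)

/-- `Ep` (a family `E₁,…,E_r`) is a partition of `E`: nonempty, pairwise disjoint pieces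
whose union is `E`. -/
def IsPartitionOf {r : ℕ} (Ep : Fin r → Set P2) (E : Set P2) : Prop :=
  (∀ j, (Ep j).Nonempty) ∧ (∀ j k, j ≠ k → Disjoint (Ep j) (Ep k)) ∧ (⋃ j, Ep j) = E

/-- `Ω_{E̲}`: compact sets `S` such that each `E_j` is contained in a single connected
component of `S`. -/
def OmegaSet {r : ℕ} (Ep : Fin r → Set P2) : Set (Set P2) :=
  {S | IsCompact S ∧ ∀ j, ∃ x ∈ S, Ep j ⊆ connectedComponentIn S x}

/-- `τ_{E̲} = inf {τ(S) : S ∈ Ω_{E̲}}`. -/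
noncomputable def tauMin (τ : P2 → ℝ) {r : ℕ} (Ep : Fin r → Set P2) : ℝ≥0∞ :=
  ⨅ S ∈ OmegaSet Ep, tauLen τ S

/-- `Ω^min_{E̲}`: the Steiner forests of `E̲`. -/
def OmegaMinSet (τ : P2 → ℝ) {r : ℕ} (Ep : Fin r → Set P2) : Set (Set P2) :=
  {S ∈ OmegaSet Ep | tauLen τ S = tauMin τ Ep}

/-- The box `Q_m = [−m,m]² ⊂ ℝ²`. -/
def Qbox (m : ℝ) : Set P2 := Set.Icc (-m) m ×ˢ Set.Icc (-m) m

/-- `Ω^min_{M,m}`: all Steiner forests `F ∈ Ω^min_{E̲}`, over `E ⊆ ∂Q_m` with `|E| ≤ M` and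
partitions `E̲` of `E`, each of whose connected components contains a point of `E`. -/
def OmegaMinMm (τ : P2 → ℝ) (M : ℕ) (m : ℝ) : Set (Set P2) :=
  {F | ∃ (E : Set P2) (r : ℕ) (Ep : Fin r → Set P2),
    E ⊆ frontier (Qbox m) ∧ E.Finite ∧ E.ncard ≤ M ∧ IsPartitionOf Ep E ∧
    F ∈ OmegaMinSet τ Ep ∧ ∀ x ∈ F, (connectedComponentIn F x ∩ E).Nonempty}

/-- The `τ`-Hausdorff "distance" `d_τ(A,B) = sup_{a∈A} inf_{b∈B} τ(a−b)` (in `ℝ≥0∞`). -/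
noncomputable def dTau (τ : P2 → ℝ) (A B : Set P2) : ℝ≥0∞ :=
  ⨆ a ∈ A, ⨅ b ∈ B, ENNReal.ofReal (τ (a - b))

namespace Stmt17

variable {τ : P2 → ℝ}

lemma zero_eq (h : IsNorm τ) : τ 0 = 0 := (h.eq_zero_iff 0).2 rfl

lemma neg_eq (h : IsNorm τ) (x : P2) : τ (-x) = τ x := by
  have := h.smul_eq (-1) x; simpa using this

lemma nonneg (h : IsNorm τ) (x : P2) : 0 ≤ τ x := by
  have h1 := h.add_le x (-x)
  rw [add_neg_cancel, zero_eq h, neg_eq h] at h1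
  linarith

lemma sub_le (h : IsNorm τ) (x y : P2) : τ x - τ y ≤ τ (x - y) := by
  have := h.add_le (x - y) y
  rw [sub_add_cancel] at this
  linarith

lemma le_norm (h : IsNorm τ) : ∃ C : ℝ, 0 ≤ C ∧ ∀ v : P2, τ v ≤ C * ‖v‖ := by
  refine ⟨τ (1,0) + τ (0,1), by have := nonneg h ((1:ℝ),(0:ℝ)); have := nonneg h ((0:ℝ),(1:ℝ)); linarith, fun v => ?_⟩
  have hv : v = v.1 • ((1:ℝ),(0:ℝ)) + v.2 • ((0:ℝ),(1:ℝ)) := by ext <;> simp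
  have h1 : τ v ≤ τ (v.1 • ((1:ℝ),(0:ℝ))) + τ (v.2 • ((0:ℝ),(1:ℝ))) := by
    conv_lhs => rw [hv]
    exact h.add_le _ _
  rw [h.smul_eq, h.smul_eq] at h1
  have h2 : |v.1| ≤ ‖v‖ := by simpa using norm_fst_le v
  have h3 : |v.2| ≤ ‖v‖ := by simpa using norm_snd_le v
  nlinarith [nonneg h ((1:ℝ),(0:ℝ)), nonneg h ((0:ℝ),(1:ℝ)), abs_nonneg v.1, abs_nonneg v.2]

lemma cont (h : IsNorm τ) : Continuous τ := by
  obtain ⟨C, hC0, hC⟩ := le_norm h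
  rw [Metric.continuous_iff]
  intro x ε hε
  refine ⟨ε / (C + 1), by positivity, fun y hy => ?_⟩
  have h1 := sub_le h y x
  have h2 := sub_le h x y
  have h3 : τ (x - y) = τ (y - x) := by rw [← neg_eq h (x - y)]; congr 1; abel
  have h4 : τ (y - x) ≤ C * ‖y - x‖ := hC _
  rw [← dist_eq_norm] at h4
  have h5 : C * dist y x < ε := by
    have h6 : C * dist y x ≤ C * (ε / (C + 1)) := mul_le_mul_of_nonneg_left hy.le hC0
    have h7 : C * (ε / (C + 1)) < ε := by
      rw [mul_div_assoc'] at *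
      rw [div_lt_iff₀ (by positivity)]
      nlinarith
    linarith
  rw [Real.dist_eq, abs_sub_lt_iff]
  constructor <;> linarith

lemma lb (h : IsNorm τ) : ∃ c : ℝ, 0 < c ∧ ∀ x : P2, c * ‖x‖ ≤ τ x := by
  have hcomp : IsCompact (Metric.sphere (0:P2) 1) := isCompact_sphere _ _
  have hne : (Metric.sphere (0:P2) 1).Nonempty := ⟨(1,0), by simp [Prod.norm_def]⟩
  obtain ⟨x₀, hx₀mem, hx₀min⟩ := hcomp.exists_isMinOn hne (cont h).continuousOn
  have hx₀ne : x₀ ≠ 0 := by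
    intro h0
    rw [h0] at hx₀mem
    simp at hx₀mem
  refine ⟨τ x₀, lt_of_le_of_ne (nonneg h x₀) (fun h0 => hx₀ne ((h.eq_zero_iff x₀).1 h0.symm)), fun x => ?_⟩
  rcases eq_or_ne x 0 with rfl | hx
  · simp [zero_eq h]
  · have hxp : 0 < ‖x‖ := norm_pos_iff.mpr hx
    have hmem : ‖x‖⁻¹ • x ∈ Metric.sphere (0:P2) 1 := by
      simp [norm_smul, abs_of_pos (inv_pos.mpr hxp), inv_mul_cancel₀ hxp.ne']
    have hm := hx₀min hmem
    simp only [Set.mem_setOf_eq] at hm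
    have h2 : τ (‖x‖⁻¹ • x) = ‖x‖⁻¹ * τ x := by
      rw [h.smul_eq, abs_of_pos (inv_pos.mpr hxp)]
    rw [h2] at hm
    have := mul_le_mul_of_nonneg_right hm hxp.le
    calc τ x₀ * ‖x‖ ≤ ‖x‖⁻¹ * τ x * ‖x‖ := this
      _ = τ x := by field_simp

lemma helper {u y z : P2} {e s : ℝ} (he : e ≠ 0) (h : e • (u - y) = s • (z - y)) :
    ∃ t : ℝ, u = t • (z - y) + y := by
  refine ⟨e⁻¹ * s, ?_⟩
  have h2 := congrArg (fun v : P2 => e⁻¹ • v) h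
  simp only [smul_smul, inv_mul_cancel₀ he, one_smul] at h2
  rw [← h2]
  abel

lemma le_key (h : IsNorm τ) {y z : P2} {a b : ℝ} (ha : 0 ≤ a) (hb : 0 ≤ b)
    (hab : a + b = 1) (u : P2) :
    τ (u - (a • y + b • z)) ≤ a * τ (u - y) + b * τ (u - z) := by
  have hsplit : u - (a • y + b • z) = a • (u - y) + b • (u - z) := by
    calc u - (a • y + b • z) = (a + b) • u - (a • y + b • z) := by rw [hab, one_smul]
      _ = a • (u - y) + b • (u - z) := by module
  rw [hsplit]
  calc τ (a • (u - y) + b • (u - z)) ≤ τ (a • (u - y)) + τ (b • (u - z)) := h.add_le _ _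
    _ = a * τ (u - y) + b * τ (u - z) := by
        rw [h.smul_eq, h.smul_eq, abs_of_nonneg ha, abs_of_nonneg hb]

lemma key (hτ : IsStrictlyConvexNorm τ) {y z : P2} (hyz : y ≠ z) {a b : ℝ}
    (ha : 0 < a) (hb : 0 < b) (hab : a + b = 1) (u : P2) :
    (∃ t : ℝ, u = t • (z - y) + y) ∨
      τ (u - (a • y + b • z)) < a * τ (u - y) + b * τ (u - z) := by
  obtain ⟨hn, hstrict⟩ := hτ
  by_cases H : ∃ c : ℝ, 0 ≤ c ∧
      (a • (u - y) = c • (b • (u - z)) ∨ b • (u - z) = c • (a • (u - y)))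
  · left
    obtain ⟨c, _, hcase | hcase⟩ := H
    · have hd : u - y = (a⁻¹ * (c * b)) • (u - z) := by
        have h2 := congrArg (fun v : P2 => a⁻¹ • v) hcase
        simpa [smul_smul, inv_mul_cancel₀ ha.ne', mul_assoc] using h2
      set d := a⁻¹ * (c * b) with hdef
      by_cases h1 : d = 1
      · exfalso
        rw [h1, one_smul] at hd
        exact hyz (by have := sub_right_inj.mp hd; exact this)
      · refine helper (e := 1 - d) (s := -d) (by intro h0; apply h1; linarith) ?_
        linear_combination (norm := module) hd
    · have hd : u - z = (b⁻¹ * (c * a)) • (u - y) := by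
        have h2 := congrArg (fun v : P2 => b⁻¹ • v) hcase
        simpa [smul_smul, inv_mul_cancel₀ hb.ne', mul_assoc] using h2
      set d := b⁻¹ * (c * a) with hdef
      by_cases h1 : d = 1
      · exfalso
        rw [h1, one_smul] at hd
        exact hyz (by have := sub_right_inj.mp hd; exact this.symm)
      · refine helper (e := 1 - d) (s := 1) (by intro h0; apply h1; linarith) ?_
        linear_combination (norm := module) hd
  · right
    have hsplit : u - (a • y + b • z) = a • (u - y) + b • (u - z) := by
      calc u - (a • y + b • z) = (a + b) • u - (a • y + b • z) := by rw [hab, one_smul]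
        _ = a • (u - y) + b • (u - z) := by module
    rw [hsplit]
    calc τ (a • (u - y) + b • (u - z)) < τ (a • (u - y)) + τ (b • (u - z)) := hstrict _ _ H
      _ = a * τ (u - y) + b * τ (u - z) := by
          rw [hn.smul_eq, hn.smul_eq, abs_of_pos ha, abs_of_pos hb]

end Stmt17

/-- For a strictly convex norm `τ` and three points `u₁, u₂, u₃` not on a
common line, `φ(y) = τ(u₁−y) + τ(u₂−y) + τ(u₃−y)` is strictly convex and attains its minimum
over `ℝ²` at a unique point. -/
theorem statement17 (τ : P2 → ℝ) (hτ : IsStrictlyConvexNorm τ) (u₁ u₂ u₃ : P2)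
    (hcol : ¬ Collinear ℝ ({u₁, u₂, u₃} : Set P2)) :
    StrictConvexOn ℝ (Set.univ : Set P2)
      (fun y : P2 => τ (u₁ - y) + τ (u₂ - y) + τ (u₃ - y)) ∧
    ∃! y₀ : P2, ∀ y : P2,
      τ (u₁ - y₀) + τ (u₂ - y₀) + τ (u₃ - y₀) ≤ τ (u₁ - y) + τ (u₂ - y) + τ (u₃ - y) := by
  have hn := hτ.1
  have hsc : StrictConvexOn ℝ (Set.univ : Set P2)
      (fun y : P2 => τ (u₁ - y) + τ (u₂ - y) + τ (u₃ - y)) := by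
    refine ⟨convex_univ, ?_⟩
    intro y _ z _ hyz a b ha hb hab
    simp only [smul_eq_mul]
    have k₁ := Stmt17.key hτ hyz ha hb hab u₁
    have k₂ := Stmt17.key hτ hyz ha hb hab u₂
    have k₃ := Stmt17.key hτ hyz ha hb hab u₃
    have hnotall : ¬ ((∃ t : ℝ, u₁ = t • (z - y) + y) ∧ (∃ t : ℝ, u₂ = t • (z - y) + y) ∧
        (∃ t : ℝ, u₃ = t • (z - y) + y)) := by
      rintro ⟨⟨t₁, ht₁⟩, ⟨t₂, ht₂⟩, ⟨t₃, ht₃⟩⟩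
      apply hcol
      rw [collinear_iff_exists_forall_eq_smul_vadd]
      refine ⟨y, z - y, ?_⟩
      intro x hx
      simp only [Set.mem_insert_iff, Set.mem_singleton_iff] at hx
      rcases hx with rfl | rfl | rfl
      · exact ⟨t₁, by simpa [vadd_eq_add] using ht₁⟩
      · exact ⟨t₂, by simpa [vadd_eq_add] using ht₂⟩
      · exact ⟨t₃, by simpa [vadd_eq_add] using ht₃⟩
    have hlt : τ (u₁ - (a • y + b • z)) + τ (u₂ - (a • y + b • z)) + τ (u₃ - (a • y + b • z)) <
        (a * τ (u₁ - y) + b * τ (u₁ - z)) + (a * τ (u₂ - y) + b * τ (u₂ - z)) +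
        (a * τ (u₃ - y) + b * τ (u₃ - z)) := by
      have l₁ := Stmt17.le_key hn (y := y) (z := z) ha.le hb.le hab u₁
      have l₂ := Stmt17.le_key hn (y := y) (z := z) ha.le hb.le hab u₂
      have l₃ := Stmt17.le_key hn (y := y) (z := z) ha.le hb.le hab u₃
      rcases k₁ with k₁ | k₁
      · rcases k₂ with k₂ | k₂
        · rcases k₃ with k₃ | k₃
          · exact absurd ⟨k₁, k₂, k₃⟩ hnotall
          · linarith
        · linarith
      · linarith
    calc τ (u₁ - (a • y + b • z)) + τ (u₂ - (a • y + b • z)) + τ (u₃ - (a • y + b • z)) <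
        (a * τ (u₁ - y) + b * τ (u₁ - z)) + (a * τ (u₂ - y) + b * τ (u₂ - z)) +
        (a * τ (u₃ - y) + b * τ (u₃ - z)) := hlt
      _ = a * (τ (u₁ - y) + τ (u₂ - y) + τ (u₃ - y)) +
          b * (τ (u₁ - z) + τ (u₂ - z) + τ (u₃ - z)) := by ring
  refine ⟨hsc, ?_⟩
  set φ : P2 → ℝ := fun y => τ (u₁ - y) + τ (u₂ - y) + τ (u₃ - y) with hφdef
  have hcont : Continuous φ := by
    have hc := Stmt17.cont hn
    exact ((hc.comp (continuous_const.sub continuous_id)).add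
      (hc.comp (continuous_const.sub continuous_id))).add
      (hc.comp (continuous_const.sub continuous_id))
  have hcoer : Filter.Tendsto φ (Filter.cocompact P2) Filter.atTop := by
    obtain ⟨c, hc, hlb⟩ := Stmt17.lb hn
    have hkey : ∀ y : P2, 3 * c * ‖y‖ - (τ u₁ + τ u₂ + τ u₃) ≤ φ y := by
      intro y
      have hb : ∀ u : P2, c * ‖y‖ - τ u ≤ τ (u - y) := by
        intro u
        have h1 : τ y ≤ τ (y - u) + τ u := by
          have := hn.add_le (y - u) u
          rwa [sub_add_cancel] at this
        have h2 : τ (y - u) = τ (u - y) := by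
          rw [← Stmt17.neg_eq hn (y - u)]; congr 1; abel
        have h3 := hlb y
        rw [h2] at h1
        linarith
      have := hb u₁; have := hb u₂; have := hb u₃
      simp only [hφdef]
      linarith
    apply Filter.tendsto_atTop_mono hkey
    have h1 : Filter.Tendsto (fun y : P2 => ‖y‖) (Filter.cocompact P2) Filter.atTop :=
      tendsto_norm_cocompact_atTop
    have h2 := h1.const_mul_atTop (by positivity : (0:ℝ) < 3 * c)
    exact Filter.tendsto_atTop_add_const_right _ _ h2
  obtain ⟨y₀, hy₀⟩ := hcont.exists_forall_le hcoer
  refine ⟨y₀, hy₀, ?_⟩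
  intro y₁ hy₁
  by_contra hne
  have heq : φ y₁ = φ y₀ := le_antisymm (hy₁ y₀) (hy₀ y₁)
  have hstep := hsc.2 (Set.mem_univ y₁) (Set.mem_univ y₀) hne
    (by norm_num : (0:ℝ) < 1/2) (by norm_num : (0:ℝ) < 1/2) (by norm_num)
  have hle := hy₀ ((1/2 : ℝ) • y₁ + (1/2 : ℝ) • y₀)
  simp only [smul_eq_mul] at hstep
  have : φ ((1/2 : ℝ) • y₁ + (1/2 : ℝ) • y₀) < φ y₀ := by
    have : φ ((1/2 : ℝ) • y₁ + (1/2 : ℝ) • y₀) < 1/2 * φ y₁ + 1/2 * φ y₀ := hstep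
    rw [heq] at this
    linarith
  linarith [hle]
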